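/- Suppose b = b_k,…,b_0 is a colour witness for ρ, d = φ(v_{m+1}) is even, and there is no index j' such that b_{j'} ≠ ⊥, b_{j'} < d, and b_{j'} is odd. Suppose j is the maximal index such that: for all i > j, b_i is an even number, b_i = ⊥, or b_i > d; either b_j = ⊥, or b_j > d and b_j is odd; and for all i < j, b_i is an even number. Define c by: for all i > j, c_i = b_i if b_i = ⊥ or b_i > d, and c_i = d if b_i is a number ≤ d (and thus even); c_j = d; and c_i = ⊥ for all i < j. Then c is a colour witness for ρ' = v_1,…,v_m,v_{m+1}. -/

import Mathlib

/-!
The new witness for `d` concatenates, from the largest colour down, the witnesses of the even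
colours that the update forgets, and closes with the new position `m + 1`: across each junction,
inner domination is the outer domination of the earlier witness.

For the length constraints, a colour `i > d` sees in `c` the same unblocked block as `b` does
from the least colour of that block. For `i ≤ d` the new entry at `j` costs `2 ^ j`: the positions
`0, …, j - 1` of `b` hold even colours, so they are unblocked from `lo` and contribute
`2 ^ j - 1`, and the new position `m + 1` pays the last unit. If `b_j` is an odd colour `o`,
the positions above `j` are paid for by the constraint of `b` at `o + 1` instead.
-/

open scoped Classical

/-- Membership in `C⁻`, where `C = {lo,…,hi}`: everything of `C` except `hi` when `hi` is odd. -/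
def CminusMem (lo hi c : ℕ) : Prop := lo ≤ c ∧ c ≤ hi ∧ (Even hi ∨ c ≠ hi)

/-- The index of the first position of an `i`-colour-witness: `1` if the colour `i` is even
and `0` if it is odd. -/
def startIdx (i : ℕ) : ℕ := if Even i then 1 else 0

variable {V : Type*}

/-- `p`, on indices `startIdx i, …, len`, is an `i`-colour-witness of length `len` for the
play prefix `v_1,…,v_m`: strictly increasing positions, all but the final one of even colour,
the final one of colour `i`, with inner domination and outer domination by `i`. -/
def IsCWit (φ : V → ℕ) (v : ℕ → V) (m i len : ℕ) (p : ℕ → ℕ) : Prop :=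
  1 ≤ len ∧
  (∀ j, startIdx i ≤ j → j ≤ len → 1 ≤ p j ∧ p j ≤ m) ∧
  (∀ j, startIdx i ≤ j → j < len → p j < p (j + 1)) ∧
  (∀ j, startIdx i ≤ j → j < len → Even (φ (v (p j)))) ∧
  φ (v (p len)) = i ∧
  (∀ j, startIdx i ≤ j → j < len → ∀ t, p j ≤ t → t ≤ p (j + 1) →
      φ (v t) ≤ max (φ (v (p j))) (φ (v (p (j + 1))))) ∧
  (∀ t, p len ≤ t → t ≤ m → φ (v t) ≤ i)

/-- The colour `c` occurs among the entries `b_0,…,b_k` of `b`. -/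
def occursIn (k : ℕ) (b : ℕ → Option ℕ) (c : ℕ) : Prop := ∃ p ≤ k, b p = some c

/-- `unblk(i,b)`: the colours `j` occurring in `b` with `i ≤ j < odd(i,b)`, where `odd(i,b)`
is the least odd colour strictly greater than `i` occurring in `b` (`∞` if none). -/
noncomputable def unblkF (hi k : ℕ) (b : ℕ → Option ℕ) (i : ℕ) : Finset ℕ :=
  (Finset.range (hi + 1)).filter fun j =>
    occursIn k b j ∧ i ≤ j ∧ ∀ o, Odd o → i < o → o ≤ j → ¬ occursIn k b o

/-- `ubp(i,b)`: the positions of `b` whose entry is a colour of `unblk(i,b)`. -/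
noncomputable def ubpF (hi k : ℕ) (b : ℕ → Option ℕ) (i : ℕ) : Finset ℕ :=
  (Finset.range (k + 1)).filter fun p => ∃ c, b p = some c ∧ c ∈ unblkF hi k b i

/-- `b = b_k,…,b_0` is a colour witness for the play prefix `v_1,…,v_m`, for the colouring
`φ` into `C = {lo,…,hi}`. -/
def IsColourWitness (lo hi : ℕ) (φ : V → ℕ) (v : ℕ → V) (m k : ℕ)
    (b : ℕ → Option ℕ) : Prop :=
  (∀ p ≤ k, ∀ c, b p = some c → CminusMem lo hi c) ∧
  -- order
  (∀ i j, j < i → i ≤ k → ∀ ci cj, b i = some ci → b j = some cj → cj ≤ ci) ∧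
  -- conciseness
  (∀ o, Odd o → ∀ i j, i ≤ k → j ≤ k → i ≠ j → b i = some o → ¬ b j = some o) ∧
  (∀ c, b 0 = some c → ¬ Odd c) ∧
  -- the family of colour witnesses
  ∃ (ℓ : ℕ → ℕ) (P : ℕ → ℕ → ℕ),
    (∀ i, occursIn k b i → IsCWit φ v m i (ℓ i) (P i)) ∧
    -- ordered witnesses
    (∀ i j, occursIn k b i → occursIn k b j → j < i → P i (ℓ i) < P j (startIdx j)) ∧
    -- length constraints
    (∀ i, CminusMem lo hi i → (∑ p ∈ ubpF hi k b i, 2 ^ p) ≤ ∑ j ∈ unblkF hi k b i, ℓ j)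

/-- The three conditions characterising the update index `j` of the overflow rule for an even
colour `d`: all entries above `j` are even numbers, `⊥`, or `> d`; the entry at `j` is `⊥` or
an odd colour `> d`; and all entries below `j` are even numbers. -/
def OverflowIdx (k : ℕ) (b : ℕ → Option ℕ) (d j : ℕ) : Prop :=
  (∀ i, j < i → i ≤ k → b i = none ∨ ∃ c, b i = some c ∧ (Even c ∨ d < c)) ∧
  (b j = none ∨ ∃ c, b j = some c ∧ d < c ∧ Odd c) ∧
  (∀ i < j, ∃ c, b i = some c ∧ Even c)

theorem cminusMem_of_le_even {lo hi c e : ℕ} (hlo : lo ≤ c) (hce : c ≤ e) (hehi : e ≤ hi)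
    (he : Even e) : CminusMem lo hi c := by
  refine ⟨hlo, hce.trans hehi, ?_⟩
  rcases hce.lt_or_eq with hce | rfl
  · exact Or.inr (by omega)
  · rcases hehi.lt_or_eq with hehi | rfl
    · exact Or.inr hehi.ne
    · exact Or.inl he

theorem CminusMem.lt_of_odd {lo hi c : ℕ} (h : CminusMem lo hi c) (hc : Odd c) : c < hi := by
  obtain ⟨-, hchi, heven | hne⟩ := h
  · exact hchi.lt_of_ne fun h => Nat.not_even_iff_odd.2 hc (h ▸ heven)
  · exact hchi.lt_of_ne hne

theorem ne_of_odd_of_even {o d : ℕ} (ho : Odd o) (hd : Even d) : o ≠ d := by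
  rintro rfl
  exact Nat.not_even_iff_odd.2 ho hd

theorem geom_sum_two_add_one (n : ℕ) : ∑ p ∈ Finset.range n, 2 ^ p + 1 = 2 ^ n := by
  have h := Nat.geomSum_eq (le_refl 2) n
  have h2 := Nat.one_le_two_pow (n := n)
  simp only [Nat.add_one_sub_one, Nat.div_one] at h
  omega

def InnerStep (φ : V → ℕ) (v : ℕ → V) (a b : ℕ) : Prop :=
  a < b ∧ ∀ t, a ≤ t → t ≤ b → φ (v t) ≤ max (φ (v a)) (φ (v b))

/-- A witness for an even colour written as a (possibly empty) list of positions, so that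
witnesses can be concatenated. -/
def IsEvenRun (φ : V → ℕ) (v : ℕ → V) (m : ℕ) (W : List ℕ) : Prop :=
  (∀ p ∈ W, 1 ≤ p ∧ p ≤ m ∧ Even (φ (v p))) ∧ W.IsChain (InnerStep φ v) ∧
    ∀ q ∈ W.getLast?, ∀ t, q ≤ t → t ≤ m → φ (v t) ≤ φ (v q)

section Runs

variable {φ : V → ℕ} {v : ℕ → V} {m : ℕ}

theorem IsCWit.last_le {i len : ℕ} {p : ℕ → ℕ} (h : IsCWit φ v m i len p) : p len ≤ m :=
  (h.2.1 len (by have := h.1; unfold startIdx; split_ifs <;> omega) le_rfl).2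

theorem IsCWit.succ {i len : ℕ} {p : ℕ → ℕ} (h : IsCWit φ v m i len p)
    (hle : φ (v (m + 1)) ≤ i) : IsCWit φ v (m + 1) i len p := by
  obtain ⟨hlen, hpos, hlt, heven, hlast, hinner, hout⟩ := h
  refine ⟨hlen, fun t h1 h2 => ⟨(hpos t h1 h2).1, (hpos t h1 h2).2.trans (Nat.le_succ m)⟩,
    hlt, heven, hlast, hinner, fun t hpt htm => ?_⟩
  rcases htm.lt_or_eq with htm | rfl
  · exact hout t hpt (by omega)
  · exact hle

theorem IsEvenRun.append {W₁ W₂ : List ℕ} (h₁ : IsEvenRun φ v m W₁) (h₂ : IsEvenRun φ v m W₂)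
    (hlt : ∀ a ∈ W₁.getLast?, ∀ b ∈ W₂.head?, a < b) : IsEvenRun φ v m (W₁ ++ W₂) := by
  obtain ⟨hmem₁, hchain₁, hout₁⟩ := h₁
  obtain ⟨hmem₂, hchain₂, hout₂⟩ := h₂
  refine ⟨fun p hp => (List.mem_append.1 hp).elim (hmem₁ p) (hmem₂ p), ?_, ?_⟩
  · refine hchain₁.append hchain₂ fun a ha b hb => ⟨hlt a ha b hb, fun t hat htb => ?_⟩
    have hbm := (hmem₂ b (List.mem_of_mem_head? hb)).2.1
    exact (hout₁ a ha t hat (htb.trans hbm)).trans (le_max_left _ _)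
  · intro q hq
    rw [List.getLast?_append] at hq
    cases hW₂ : W₂.getLast? with
    | none => simp only [hW₂, Option.none_or] at hq; exact hout₁ q hq
    | some q₂ => simp only [hW₂, Option.some_or, Option.mem_def, Option.some_inj] at hq
                 exact hq ▸ hout₂ q₂ hW₂

theorem IsEvenRun.append_succ {W : List ℕ} (h : IsEvenRun φ v m W) (hd : Even (φ (v (m + 1)))) :
    IsEvenRun φ v (m + 1) (W ++ [m + 1]) := by
  obtain ⟨hmem, hchain, hout⟩ := h
  refine ⟨fun p hp => ?_, hchain.append (List.isChain_singleton _) fun a ha b hb => ?_, ?_⟩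
  · rcases List.mem_append.1 hp with hp | hp
    · obtain ⟨h1, h2, h3⟩ := hmem p hp
      exact ⟨h1, h2.trans (Nat.le_succ m), h3⟩
    · obtain rfl := List.mem_singleton.1 hp
      exact ⟨by omega, le_rfl, hd⟩
  · obtain rfl : b = m + 1 := by simpa using hb.symm
    have ham := (hmem a (List.mem_of_mem_getLast? ha)).2.1
    refine ⟨by omega, fun t hat htb => ?_⟩
    rcases htb.lt_or_eq with htb | rfl
    · exact (hout a ha t hat (by omega)).trans (le_max_left _ _)
    · exact le_max_right _ _
  · intro q hq t hqt htm
    obtain rfl : q = m + 1 := by simpa using hq.symm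
    rw [le_antisymm htm hqt]

theorem IsEvenRun.isCWit {W : List ℕ} {q : ℕ} (h : IsEvenRun φ v m W)
    (hq : W.getLast? = some q) :
    IsCWit φ v m (φ (v q)) W.length (fun t => W.getD (t - 1) 0) := by
  obtain ⟨hmem, hchain, hout⟩ := h
  have hne : W ≠ [] := by rintro rfl; simp at hq
  have hlen : 1 ≤ W.length := List.length_pos_iff.2 hne
  have hstart : startIdx (φ (v q)) = 1 := if_pos (hmem q (List.mem_of_getLast? hq)).2.2
  have hget : ∀ t (ht : t < W.length), W.getD t 0 = W[t] := fun t ht =>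
    List.getD_eq_getElem W 0 ht
  have hlast : W.getD (W.length - 1) 0 = q := by
    rw [hget _ (by omega), ← List.getLast_eq_getElem hne]
    exact Option.some_inj.1 ((List.getLast?_eq_some_getLast hne).symm.trans hq)
  have hstep : ∀ t, 1 ≤ t → t < W.length →
      InnerStep φ v (W.getD (t - 1) 0) (W.getD (t + 1 - 1) 0) := by
    intro t h1 h2
    rw [hget _ (by omega), hget _ (by omega)]
    have := List.isChain_iff_getElem.1 hchain (t - 1) (by omega)
    simpa [show t - 1 + 1 = t + 1 - 1 by omega] using this
  unfold IsCWit
  simp only [hstart]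
  refine ⟨hlen, fun t h1 h2 => ?_, fun t h1 h2 => (hstep t h1 h2).1, fun t h1 h2 => ?_,
    by rw [hlast], fun t h1 h2 => (hstep t h1 h2).2, fun t => by rw [hlast]; exact hout q hq t⟩
  · rw [hget _ (by omega)]
    exact ⟨(hmem _ (List.getElem_mem _)).1, (hmem _ (List.getElem_mem _)).2.1⟩
  · rw [hget _ (by omega)]
    exact (hmem _ (List.getElem_mem _)).2.2

theorem IsCWit.isEvenRun {i len : ℕ} {p : ℕ → ℕ} (hi : Even i) (h : IsCWit φ v m i len p) :
    IsEvenRun φ v m ((List.range' 1 len).map p) ∧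
      ((List.range' 1 len).map p).head? = some (p 1) ∧
      ((List.range' 1 len).map p).getLast? = some (p len) := by
  obtain ⟨hlen, hpos, hlt, heven, hlast, hinner, hout⟩ := h
  simp only [startIdx, if_pos hi] at hpos hlt heven hinner
  obtain ⟨n, rfl⟩ : ∃ n, len = n + 1 := ⟨len - 1, by omega⟩
  refine ⟨⟨fun q hq => ?_, List.isChain_iff_getElem.2 fun t ht => ?_, ?_⟩, ?_, ?_⟩
  · obtain ⟨t, ht, rfl⟩ := List.mem_map.1 hq
    rw [List.mem_range'_1] at ht
    refine ⟨(hpos t ht.1 (by omega)).1, (hpos t ht.1 (by omega)).2, ?_⟩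
    rcases Nat.lt_or_ge t (n + 1) with htn | htn
    · exact heven t ht.1 htn
    · rw [show t = n + 1 by omega, hlast]; exact hi
  · simp only [List.length_map, List.length_range'] at ht
    simp only [List.getElem_map, List.getElem_range', one_mul]
    exact ⟨hlt (1 + t) (by omega) (by omega), hinner (1 + t) (by omega) (by omega)⟩
  · intro q hq t hqt htm
    obtain rfl : q = p (n + 1) := by simpa [List.getLast?_range', add_comm, eq_comm] using hq
    rw [hlast]
    exact hout t hqt htm
  · simp [List.range'_succ]
  · simp [List.getLast?_range']

theorem exists_isEvenRun_of_witnesses (S : Finset ℕ) {ℓ : ℕ → ℕ} {P : ℕ → ℕ → ℕ}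
    (heven : ∀ x ∈ S, Even x) (hwit : ∀ x ∈ S, IsCWit φ v m x (ℓ x) (P x))
    (hord : ∀ x ∈ S, ∀ y ∈ S, y < x → P x (ℓ x) < P y 1) :
    ∃ W, IsEvenRun φ v m W ∧ W.length = ∑ x ∈ S, ℓ x ∧ ∀ q ∈ W.head?, ∃ y ∈ S, q = P y 1 := by
  induction S using Finset.induction_on_max with
  | empty => exact ⟨[], ⟨by simp, List.IsChain.nil, by simp⟩, by simp, by simp⟩
  | insert a s hlt ih =>
    have has : a ∉ s := fun h => lt_irrefl a (hlt a h)
    obtain ⟨W, hW, hlen, hhead⟩ := ih (fun x hx => heven x (Finset.mem_insert_of_mem hx))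
      (fun x hx => hwit x (Finset.mem_insert_of_mem hx))
      (fun x hx y hy => hord x (Finset.mem_insert_of_mem hx) y (Finset.mem_insert_of_mem hy))
    obtain ⟨hrun, hfirst, hlast⟩ :=
      (hwit a (Finset.mem_insert_self a s)).isEvenRun (heven a (Finset.mem_insert_self a s))
    refine ⟨_, hrun.append hW fun q hq r hr => ?_, ?_, fun q hq => ?_⟩
    · obtain ⟨y, hy, rfl⟩ := hhead r hr
      obtain rfl : q = P a (ℓ a) := by simpa [hlast, eq_comm] using hq
      exact hord a (Finset.mem_insert_self a s) y (Finset.mem_insert_of_mem hy) (hlt y hy)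
    · rw [List.length_append, List.length_map, List.length_range', hlen,
        Finset.sum_insert has]
    · refine ⟨a, Finset.mem_insert_self a s, ?_⟩
      rw [List.head?_append, hfirst] at hq
      simpa [eq_comm] using hq

theorem exists_cwit_succ_of_witnesses (S : Finset ℕ) {ℓ : ℕ → ℕ} {P : ℕ → ℕ → ℕ}
    (hd : Even (φ (v (m + 1)))) (heven : ∀ x ∈ S, Even x)
    (hwit : ∀ x ∈ S, IsCWit φ v m x (ℓ x) (P x))
    (hord : ∀ x ∈ S, ∀ y ∈ S, y < x → P x (ℓ x) < P y 1) :
    ∃ p, IsCWit φ v (m + 1) (φ (v (m + 1))) (∑ x ∈ S, ℓ x + 1) p ∧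
      (p 1 = m + 1 ∨ ∃ y ∈ S, p 1 = P y 1) := by
  obtain ⟨W, hW, hlen, hhead⟩ := exists_isEvenRun_of_witnesses S heven hwit hord
  have hwit' := (hW.append_succ hd).isCWit (List.getLast?_concat (l := W))
  rw [List.length_append, hlen, List.length_singleton] at hwit'
  refine ⟨_, hwit', ?_⟩
  cases W with
  | nil => exact Or.inl rfl
  | cons q W => exact Or.inr (hhead q rfl)

end Runs

def EntriesOrdered (k : ℕ) (b : ℕ → Option ℕ) : Prop :=
  ∀ i j, j < i → i ≤ k → ∀ ci cj, b i = some ci → b j = some cj → cj ≤ ci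

def OddEntriesUnique (k : ℕ) (b : ℕ → Option ℕ) : Prop :=
  ∀ o, Odd o → ∀ i j, i ≤ k → j ≤ k → i ≠ j → b i = some o → ¬ b j = some o

/-- The sequence `c` of the overflow rule for the colour `d` at the index `j`. -/
def overflowUpdate (b : ℕ → Option ℕ) (d j : ℕ) : ℕ → Option ℕ :=
  fun i => if j < i then (if ∃ c, b i = some c ∧ c ≤ d then some d else b i)
    else if i = j then some d else none

section Unblocked

variable {hi k : ℕ} {b : ℕ → Option ℕ} {i x p : ℕ}

theorem mem_unblkF : x ∈ unblkF hi k b i ↔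
    x ≤ hi ∧ occursIn k b x ∧ i ≤ x ∧ ∀ o, Odd o → i < o → o ≤ x → ¬ occursIn k b o := by
  simp [unblkF]

theorem mem_ubpF : p ∈ ubpF hi k b i ↔ p ≤ k ∧ ∃ x, b p = some x ∧ x ∈ unblkF hi k b i := by
  simp [ubpF]

/-- An odd colour blocks itself. -/
theorem le_of_odd_of_mem_unblkF (hx : x ∈ unblkF hi k b i) (hodd : Odd x) : x ≤ i := by
  obtain ⟨-, hocc, -, hblk⟩ := mem_unblkF.1 hx
  by_contra! h
  exact hblk x hodd h le_rfl hocc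

theorem EntriesOrdered.le {k : ℕ} {b : ℕ → Option ℕ} (h : EntriesOrdered k b) {p q x y : ℕ}
    (hpq : p < q) (hq : q ≤ k) (hp : b p = some x) (hq' : b q = some y) : x ≤ y :=
  h q p hpq hq y x hq' hp

end Unblocked

section OverflowUpdate

variable {k : ℕ} {b : ℕ → Option ℕ} {d j p x : ℕ}

@[simp]
theorem overflowUpdate_self : overflowUpdate b d j j = some d := by
  simp [overflowUpdate]

theorem overflowUpdate_of_lt (hp : p < j) : overflowUpdate b d j p = none := by
  simp [overflowUpdate, hp.ne, Nat.lt_asymm hp]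

theorem overflowUpdate_of_gt (hp : j < p) :
    overflowUpdate b d j p = (b p).map fun z => max z d := by
  unfold overflowUpdate
  rw [if_pos hp]
  cases hb : b p with
  | none => simp
  | some z =>
    by_cases hz : z ≤ d
    · simp [hz]
    · simp [hz, (not_le.1 hz).le]

theorem overflowUpdate_eq_some_of_ne (hx : x ≠ d) :
    overflowUpdate b d j p = some x ↔ j < p ∧ d < x ∧ b p = some x := by
  rcases lt_trichotomy p j with hp | rfl | hp
  · simp [overflowUpdate_of_lt hp, hp.not_gt]
  · simp [hx.symm]
  · rw [overflowUpdate_of_gt hp, Option.map_eq_some_iff]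
    refine ⟨fun ⟨z, hz, hzx⟩ => ?_, fun ⟨_, hdx, hbx⟩ => ⟨x, hbx, max_eq_left hdx.le⟩⟩
    have hdz : d < z := by
      by_contra! h
      exact hx (hzx ▸ max_eq_right h)
    rw [max_eq_left hdz.le] at hzx
    exact ⟨hp, hzx ▸ hdz, hzx ▸ hz⟩

theorem le_of_overflowUpdate_eq_some (h : overflowUpdate b d j p = some x) : d ≤ x := by
  by_contra! hxd
  exact absurd ((overflowUpdate_eq_some_of_ne hxd.ne).1 h).2.1 (by omega)

theorem occursIn_overflowUpdate_self (hj : j ≤ k) : occursIn k (overflowUpdate b d j) d :=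
  ⟨j, hj, overflowUpdate_self⟩

theorem occursIn_overflowUpdate_of_ne (hx : x ≠ d) :
    occursIn k (overflowUpdate b d j) x ↔ d < x ∧ ∃ q, j < q ∧ q ≤ k ∧ b q = some x := by
  simp only [occursIn, overflowUpdate_eq_some_of_ne hx]
  grind

theorem EntriesOrdered.overflowUpdate (h : EntriesOrdered k b) :
    EntriesOrdered k (overflowUpdate b d j) := by
  intro p q hqp hpk x y hcp hcq
  rcases lt_trichotomy q j with hq | rfl | hq
  · simp [overflowUpdate_of_lt hq] at hcq
  · rw [overflowUpdate_self, Option.some_inj] at hcq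
    exact hcq ▸ le_of_overflowUpdate_eq_some hcp
  · rw [overflowUpdate_of_gt hq, Option.map_eq_some_iff] at hcq
    rw [overflowUpdate_of_gt (hq.trans hqp), Option.map_eq_some_iff] at hcp
    obtain ⟨y', hby, rfl⟩ := hcq
    obtain ⟨x', hbx, rfl⟩ := hcp
    exact max_le_max_right d (h.le hqp hpk hby hbx)

theorem OddEntriesUnique.overflowUpdate (hd : Even d) (h : OddEntriesUnique k b) :
    OddEntriesUnique k (overflowUpdate b d j) := by
  intro o ho p q hp hq hpq hcp hcq
  have hod := ne_of_odd_of_even ho hd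
  exact h o ho p q hp hq hpq ((overflowUpdate_eq_some_of_ne hod).1 hcp).2.2
    ((overflowUpdate_eq_some_of_ne hod).1 hcq).2.2

theorem overflowUpdate_zero_not_odd (hd : Even d) (hx : overflowUpdate b d j 0 = some x) :
    ¬ Odd x := by
  intro hodd
  exact absurd ((overflowUpdate_eq_some_of_ne (ne_of_odd_of_even hodd hd)).1 hx).1
    (Nat.not_lt_zero j)

end OverflowUpdate

section OverflowWitness

variable {lo hi k : ℕ} {b : ℕ → Option ℕ} {d j i o x : ℕ}

theorem range_subset_ubpF (hord : EntriesOrdered k b)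
    (hC : ∀ p ≤ k, ∀ x, b p = some x → CminusMem lo hi x)
    (hbelow : ∀ p < j, ∃ x, b p = some x ∧ Even x) (hj : j ≤ k) :
    Finset.range j ⊆ ubpF hi k b lo := by
  intro p hp
  rw [Finset.mem_range] at hp
  obtain ⟨z, hbz, hz⟩ := hbelow p hp
  obtain ⟨hloz, hzhi, -⟩ := hC p (by omega) z hbz
  refine mem_ubpF.2 ⟨by omega, z, hbz, mem_unblkF.2 ⟨hzhi, ⟨p, by omega, hbz⟩, hloz, ?_⟩⟩
  rintro o ho - hoz ⟨r, hr, hbr⟩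
  rcases lt_or_ge r j with hrj | hrj
  · obtain ⟨z', hbz', hz'⟩ := hbelow r hrj
    rw [hbr, Option.some_inj] at hbz'
    exact Nat.not_even_iff_odd.2 ho (hbz' ▸ hz')
  · have hzo := hord.le (hp.trans_le hrj) hr hbz hbr
    exact Nat.not_even_iff_odd.2 ho (le_antisymm hoz hzo ▸ hz)

theorem occursIn_overflowUpdate_of_odd (hbelow : ∀ p < j, ∃ x, b p = some x ∧ Even x)
    (hodd : ∀ p ≤ k, ∀ x, b p = some x → Odd x → d < x) {o : ℕ} (ho : Odd o)
    (hocc : occursIn k b o) (hbj : b j ≠ some o) : occursIn k (overflowUpdate b d j) o := by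
  obtain ⟨r, hr, hbr⟩ := hocc
  rcases lt_trichotomy r j with hrj | rfl | hjr
  · obtain ⟨z, hbz, hz⟩ := hbelow r hrj
    rw [hbr, Option.some_inj] at hbz
    exact absurd (hbz ▸ hz) (Nat.not_even_iff_odd.2 ho)
  · exact absurd hbr hbj
  · have hdo := hodd r hr o hbr ho
    exact (occursIn_overflowUpdate_of_ne hdo.ne').2 ⟨hdo, r, hjr, hr, hbr⟩

theorem lt_of_mem_ubpF_overflowUpdate {p : ℕ} (hp : p ∈ ubpF hi k (overflowUpdate b d j) i)
    (hpj : p ≠ j) : j < p := by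
  obtain ⟨-, x, hx, -⟩ := mem_ubpF.1 hp
  by_contra! h
  simp [overflowUpdate_of_lt (h.lt_of_ne hpj)] at hx

theorem mem_unblkF_overflowUpdate_self (hj : j ≤ k) (hd : Even d) (hdhi : d ≤ hi)
    (hid : i ≤ d) : d ∈ unblkF hi k (overflowUpdate b d j) i := by
  refine mem_unblkF.2 ⟨hdhi, occursIn_overflowUpdate_self hj, hid, ?_⟩
  rintro o ho - hod ⟨r, -, hr⟩
  exact ne_of_odd_of_even ho hd (le_antisymm hod (le_of_overflowUpdate_eq_some hr))

theorem sum_ubpF_overflowUpdate_le_of_gt {ℓ : ℕ → ℕ} (hord : EntriesOrdered k b)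
    (hC : ∀ p ≤ k, ∀ x, b p = some x → CminusMem lo hi x)
    (hlen : ∀ i, CminusMem lo hi i → ∑ p ∈ ubpF hi k b i, 2 ^ p ≤ ∑ x ∈ unblkF hi k b i, ℓ x)
    (hdi : d < i) :
    ∑ p ∈ ubpF hi k (overflowUpdate b d j) i, 2 ^ p ≤
      ∑ x ∈ unblkF hi k (overflowUpdate b d j) i, ℓ x := by
  set c := overflowUpdate b d j
  rcases (unblkF hi k c i).eq_empty_or_nonempty with hU | hU
  · have hP : ubpF hi k c i = ∅ := by
      ext p
      simp [mem_ubpF, hU]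
    simp [hU, hP]
  -- the least unblocked colour `y` of `c` already heads the same unblocked block of `b`
  set y := (unblkF hi k c i).min' hU
  have hy : y ∈ unblkF hi k c i := Finset.min'_mem _ _
  obtain ⟨-, hyc, hiy, hyblk⟩ := mem_unblkF.1 hy
  obtain ⟨-, qy, hjqy, hqy, hby⟩ := (occursIn_overflowUpdate_of_ne (by omega : y ≠ d)).1 hyc
  have hc : ∀ {p x}, d < x → j < p → b p = some x → c p = some x := fun hdx hjp hbx =>
    (overflowUpdate_eq_some_of_ne hdx.ne').2 ⟨hjp, hdx, hbx⟩
  have hU_eq : unblkF hi k c i = unblkF hi k b y := by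
    ext x
    constructor
    · intro hx
      have hyx := Finset.min'_le _ x hx
      obtain ⟨hxhi, hxc, -, hxblk⟩ := mem_unblkF.1 hx
      obtain ⟨-, qx, -, hqx, hbx⟩ := (occursIn_overflowUpdate_of_ne (by omega)).1 hxc
      refine mem_unblkF.2 ⟨hxhi, ⟨qx, hqx, hbx⟩, hyx, fun o ho hyo hox ⟨r, hr, hbr⟩ => ?_⟩
      rcases lt_or_ge j r with hjr | hrj
      · exact hxblk o ho (by omega) hox ⟨r, hr, hc (by omega) hjr hbr⟩
      · have := hord.le (hrj.trans_lt hjqy) hqy hbr hby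
        omega
    · intro hx
      obtain ⟨hxhi, ⟨r, hr, hbr⟩, hyx, hxblk⟩ := mem_unblkF.1 hx
      refine mem_unblkF.2 ⟨hxhi, ?_, by omega, fun o ho hio hox hoc => ?_⟩
      · rcases lt_or_ge j r with hjr | hrj
        · exact ⟨r, hr, hc (by omega) hjr hbr⟩
        · exact le_antisymm (hord.le (hrj.trans_lt hjqy) hqy hbr hby) hyx ▸ hyc
      · obtain ⟨-, q, -, hq, hbq⟩ := (occursIn_overflowUpdate_of_ne (by omega)).1 hoc
        rcases lt_or_ge y o with hyo | hoy
        · exact hxblk o ho hyo hox ⟨q, hq, hbq⟩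
        · exact hyblk o ho hio hoy hoc
  have hP : ubpF hi k c i ⊆ ubpF hi k b y := by
    intro p hp
    obtain ⟨hpk, x, hcx, hx⟩ := mem_ubpF.1 hp
    have hix := (mem_unblkF.1 hx).2.2.1
    exact mem_ubpF.2 ⟨hpk, x, ((overflowUpdate_eq_some_of_ne (by omega)).1 hcx).2.2, hU_eq ▸ hx⟩
  calc _ ≤ ∑ p ∈ ubpF hi k b y, 2 ^ p := Finset.sum_le_sum_of_subset hP
    _ ≤ _ := hU_eq ▸ hlen y (hC qy hqy y hby)

/-- The colours whose witnesses are concatenated into the new witness for `d`. -/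
noncomputable def mergedColours (lo hi k : ℕ) (b : ℕ → Option ℕ) (d j : ℕ) : Finset ℕ :=
  (unblkF hi k b lo).filter fun x => ¬ (d < x ∧ occursIn k (overflowUpdate b d j) x)

theorem even_of_mem_mergedColours (hodd : ∀ p ≤ k, ∀ x, b p = some x → Odd x → d < x)
    (hlod : lo ≤ d) (hx : x ∈ mergedColours lo hi k b d j) : Even x := by
  have hxU := (Finset.mem_filter.1 hx).1
  obtain ⟨-, ⟨r, hr, hbr⟩, -, -⟩ := mem_unblkF.1 hxU
  by_contra hxe
  have hxo := Nat.not_even_iff_odd.1 hxe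
  have := le_of_odd_of_mem_unblkF hxU hxo
  have := hodd r hr x hbr hxo
  omega

theorem occursIn_of_mem_mergedColours (hx : x ∈ mergedColours lo hi k b d j) : occursIn k b x :=
  (mem_unblkF.1 (Finset.mem_filter.1 hx).1).2.1

theorem lt_of_mem_mergedColours (hord : EntriesOrdered k b)
    (hx : x ∈ mergedColours lo hi k b d j) {y : ℕ}
    (hy : occursIn k (overflowUpdate b d j) y) (hyd : y ≠ d) : x < y := by
  obtain ⟨hxU, hxc⟩ := Finset.mem_filter.1 hx
  obtain ⟨-, ⟨r, hr, hbr⟩, -, -⟩ := mem_unblkF.1 hxU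
  obtain ⟨hdy, q, hjq, hq, hby⟩ := (occursIn_overflowUpdate_of_ne hyd).1 hy
  by_cases hxd : x ≤ d
  · omega
  have hxc' : ¬ occursIn k (overflowUpdate b d j) x := fun h => hxc ⟨by omega, h⟩
  have hrj : r ≤ j := by
    by_contra! hjr
    exact hxc' ⟨r, hr, (overflowUpdate_eq_some_of_ne (by omega)).2 ⟨hjr, by omega, hbr⟩⟩
  have hxy := hord.le (hrj.trans_lt hjq) hq hbr hby
  exact hxy.lt_of_ne fun h => hxc' (h ▸ hy)

theorem sum_ubpF_overflowUpdate_le_of_none {ℓ : ℕ → ℕ} (hord : EntriesOrdered k b)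
    (hC : ∀ p ≤ k, ∀ x, b p = some x → CminusMem lo hi x)
    (hbelow : ∀ p < j, ∃ x, b p = some x ∧ Even x)
    (hodd : ∀ p ≤ k, ∀ x, b p = some x → Odd x → d < x)
    (hlen : ∀ i, CminusMem lo hi i → ∑ p ∈ ubpF hi k b i, 2 ^ p ≤ ∑ x ∈ unblkF hi k b i, ℓ x)
    (hj : j ≤ k) (hbj : b j = none) (hd : Even d) (hdhi : d ≤ hi) (hloi : lo ≤ i)
    (hid : i ≤ d) :
    ∑ p ∈ ubpF hi k (overflowUpdate b d j) i, 2 ^ p ≤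
      ∑ x ∈ mergedColours lo hi k b d j, ℓ x + 1 +
        ∑ x ∈ unblkF hi k (overflowUpdate b d j) i \ {d}, ℓ x := by
  set c := overflowUpdate b d j
  have hjB : j ∈ ubpF hi k c i :=
    mem_ubpF.2 ⟨hj, d, overflowUpdate_self, mem_unblkF_overflowUpdate_self hj hd hdhi hid⟩
  have hoddc : ∀ o, Odd o → occursIn k b o → occursIn k c o := fun o ho hocc =>
    occursIn_overflowUpdate_of_odd hbelow hodd ho hocc (by simp [hbj])
  have hBsub : (ubpF hi k c i).erase j ∪ Finset.range j ⊆ ubpF hi k b lo := by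
    refine Finset.union_subset (fun p hp => ?_) (range_subset_ubpF hord hC hbelow hj)
    obtain ⟨hpj, hp⟩ := Finset.mem_erase.1 hp
    have hjp := lt_of_mem_ubpF_overflowUpdate hp hpj
    obtain ⟨hpk, x, hcx, hx⟩ := mem_ubpF.1 hp
    obtain ⟨hxhi, -, -, hxblk⟩ := mem_unblkF.1 hx
    rw [show c p = _ from overflowUpdate_of_gt hjp, Option.map_eq_some_iff] at hcx
    obtain ⟨z, hbz, rfl⟩ := hcx
    obtain ⟨hloz, -, -⟩ := hC p hpk z hbz
    refine mem_ubpF.2 ⟨hpk, z, hbz, mem_unblkF.2 ⟨by omega, ⟨p, hpk, hbz⟩, hloz, ?_⟩⟩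
    rintro o ho - hoz ⟨r, hr, hbr⟩
    have hdo := hodd r hr o hbr ho
    exact hxblk o ho (by omega) (hoz.trans (le_max_left z d)) (hoddc o ho ⟨r, hr, hbr⟩)
  have hdisj : Disjoint ((ubpF hi k c i).erase j) (Finset.range j) := by
    refine Finset.disjoint_left.2 fun p hp hpr => ?_
    obtain ⟨hpj, hp⟩ := Finset.mem_erase.1 hp
    have := lt_of_mem_ubpF_overflowUpdate hp hpj
    simp at hpr
    omega
  have hKsub : (unblkF hi k b lo).filter (fun x => d < x ∧ occursIn k c x) ⊆
      unblkF hi k c i \ {d} := by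
    intro x hx
    obtain ⟨hxU, hdx, hxc⟩ := Finset.mem_filter.1 hx
    obtain ⟨hxhi, -, -, hxblk⟩ := mem_unblkF.1 hxU
    refine Finset.mem_sdiff.2 ⟨mem_unblkF.2 ⟨hxhi, hxc, by omega, ?_⟩, by simp [hdx.ne']⟩
    intro o ho hio hox hoc
    obtain ⟨hdo, q, -, hq, hbq⟩ := (occursIn_overflowUpdate_of_ne (ne_of_odd_of_even ho hd)).1 hoc
    exact hxblk o ho (by omega) hox ⟨q, hq, hbq⟩
  have hloC : CminusMem lo hi lo := cminusMem_of_le_even le_rfl (hloi.trans hid) hdhi hd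
  have hsplit := Finset.sum_filter_add_sum_filter_not (unblkF hi k b lo)
    (fun x => d < x ∧ occursIn k c x) ℓ
  have h1 := Finset.sum_le_sum_of_subset (f := fun p => 2 ^ p) hBsub
  have h2 := Finset.sum_le_sum_of_subset (f := ℓ) hKsub
  rw [Finset.sum_union hdisj] at h1
  have hM : ∑ x ∈ mergedColours lo hi k b d j, ℓ x =
      ∑ x ∈ (unblkF hi k b lo).filter (fun x => ¬ (d < x ∧ occursIn k c x)), ℓ x := rfl
  have := hlen lo hloC
  rw [← Finset.add_sum_erase _ _ hjB, ← geom_sum_two_add_one j, hM]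
  omega

theorem sum_ubpF_overflowUpdate_le_of_odd {ℓ : ℕ → ℕ} (hord : EntriesOrdered k b)
    (hcon : OddEntriesUnique k b) (hC : ∀ p ≤ k, ∀ x, b p = some x → CminusMem lo hi x)
    (hbelow : ∀ p < j, ∃ x, b p = some x ∧ Even x)
    (hodd : ∀ p ≤ k, ∀ x, b p = some x → Odd x → d < x)
    (hlen : ∀ i, CminusMem lo hi i → ∑ p ∈ ubpF hi k b i, 2 ^ p ≤ ∑ x ∈ unblkF hi k b i, ℓ x)
    (hj : j ≤ k) (hbj : b j = some o) (ho : Odd o) (hd : Even d) (hdhi : d ≤ hi)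
    (hloi : lo ≤ i) (hid : i ≤ d) :
    ∑ p ∈ ubpF hi k (overflowUpdate b d j) i, 2 ^ p ≤
      ∑ x ∈ mergedColours lo hi k b d j, ℓ x + 1 +
        ∑ x ∈ unblkF hi k (overflowUpdate b d j) i \ {d}, ℓ x := by
  set c := overflowUpdate b d j
  have hdo := hodd j hj o hbj ho
  have hjB : j ∈ ubpF hi k c i :=
    mem_ubpF.2 ⟨hj, d, overflowUpdate_self, mem_unblkF_overflowUpdate_self hj hd hdhi hid⟩
  have habove : ∀ {p z}, j < p → p ≤ k → b p = some z → o < z := fun {p z} hjp hpk hbz =>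
    (hord.le hjp hpk hbj hbz).lt_of_ne fun h => hcon o ho p j hpk hj hjp.ne' (h ▸ hbz) hbj
  have hnext : ∀ {o'}, Odd o' → o < o' → o + 1 < o' := fun {o'} ho' hoo' =>
    lt_of_le_of_ne hoo' fun h => ne_of_odd_of_even ho' (h ▸ ho.add_one) h.symm
  have hBsub : (ubpF hi k c i).erase j ⊆ ubpF hi k b (o + 1) := by
    intro p hp
    obtain ⟨hpj, hp⟩ := Finset.mem_erase.1 hp
    have hjp := lt_of_mem_ubpF_overflowUpdate hp hpj
    obtain ⟨hpk, x, hcx, hx⟩ := mem_ubpF.1 hp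
    obtain ⟨hxhi, -, -, hxblk⟩ := mem_unblkF.1 hx
    rw [show c p = _ from overflowUpdate_of_gt hjp, Option.map_eq_some_iff] at hcx
    obtain ⟨z, hbz, rfl⟩ := hcx
    have hoz := habove hjp hpk hbz
    rw [max_eq_left (by omega)] at hxblk hxhi
    refine mem_ubpF.2 ⟨hpk, z, hbz, mem_unblkF.2 ⟨hxhi, ⟨p, hpk, hbz⟩, hoz, ?_⟩⟩
    intro o' ho' hoo' ho'z hocc
    have hbj' : b j ≠ some o' := by rw [hbj]; simp; omega
    exact hxblk o' ho' (by omega) ho'z (occursIn_overflowUpdate_of_odd hbelow hodd ho' hocc hbj')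
  have hKsub : unblkF hi k b (o + 1) ⊆ unblkF hi k c i \ {d} := by
    intro x hx
    obtain ⟨hxhi, ⟨r, hr, hbr⟩, hox, hxblk⟩ := mem_unblkF.1 hx
    have hjr : j < r := by
      by_contra! hrj
      have hxo : x ≤ o := by
        rcases hrj.lt_or_eq with hrj | rfl
        · exact hord.le hrj hj hbr hbj
        · exact (Option.some_inj.1 (hbr.symm.trans hbj)).le
      omega
    have hxc : occursIn k c x :=
      ⟨r, hr, (overflowUpdate_eq_some_of_ne (by omega)).2 ⟨hjr, by omega, hbr⟩⟩
    refine Finset.mem_sdiff.2 ⟨mem_unblkF.2 ⟨hxhi, hxc, by omega, ?_⟩, by simp; omega⟩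
    intro o' ho' hio' ho'x hoc
    obtain ⟨-, q, hjq, hq, hbq⟩ := (occursIn_overflowUpdate_of_ne (ne_of_odd_of_even ho' hd)).1 hoc
    exact hxblk o' ho' (hnext ho' (habove hjq hq hbq)) ho'x ⟨q, hq, hbq⟩
  have hM : mergedColours lo hi k b d j = unblkF hi k b lo := by
    refine Finset.filter_true_of_mem fun x hx ⟨hdx, hxc⟩ => ?_
    obtain ⟨-, -, -, hxblk⟩ := mem_unblkF.1 hx
    obtain ⟨-, q, hjq, hq, hbq⟩ := (occursIn_overflowUpdate_of_ne hdx.ne').1 hxc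
    exact hxblk o ho (by omega) (habove hjq hq hbq).le ⟨j, hj, hbj⟩
  have hloC : CminusMem lo hi lo := cminusMem_of_le_even le_rfl (hloi.trans hid) hdhi hd
  have ho1C : CminusMem lo hi (o + 1) :=
    cminusMem_of_le_even (by omega) le_rfl ((hC j hj o hbj).lt_of_odd ho) ho.add_one
  have h1 := Finset.sum_le_sum_of_subset (f := fun p => 2 ^ p) hBsub
  have h2 := Finset.sum_le_sum_of_subset (f := ℓ) hKsub
  have h3 := Finset.sum_le_sum_of_subset (f := fun p => 2 ^ p)
    (range_subset_ubpF hord hC hbelow hj)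
  have := hlen lo hloC
  have := hlen (o + 1) ho1C
  rw [← Finset.add_sum_erase _ _ hjB, ← geom_sum_two_add_one j, hM]
  omega

theorem sum_ubpF_overflowUpdate_le {ℓ : ℕ → ℕ} (hord : EntriesOrdered k b)
    (hcon : OddEntriesUnique k b) (hC : ∀ p ≤ k, ∀ x, b p = some x → CminusMem lo hi x)
    (hidx : OverflowIdx k b d j) (hodd : ∀ p ≤ k, ∀ x, b p = some x → Odd x → d < x)
    (hlen : ∀ i, CminusMem lo hi i → ∑ p ∈ ubpF hi k b i, 2 ^ p ≤ ∑ x ∈ unblkF hi k b i, ℓ x)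
    (hj : j ≤ k) (hd : Even d) (hdhi : d ≤ hi) {i : ℕ} (hiC : CminusMem lo hi i) :
    ∑ p ∈ ubpF hi k (overflowUpdate b d j) i, 2 ^ p ≤
      ∑ x ∈ unblkF hi k (overflowUpdate b d j) i,
        Function.update ℓ d (∑ x ∈ mergedColours lo hi k b d j, ℓ x + 1) x := by
  rcases le_or_gt i d with hid | hdi
  · rw [Finset.sum_update_of_mem (mem_unblkF_overflowUpdate_self hj hd hdhi hid)]
    rcases hidx.2.1 with hbj | ⟨o, hbj, -, ho⟩
    · exact sum_ubpF_overflowUpdate_le_of_none hord hC hidx.2.2 hodd hlen hj hbj hd hdhi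
        hiC.1 hid
    · exact sum_ubpF_overflowUpdate_le_of_odd hord hcon hC hidx.2.2 hodd hlen hj hbj ho hd
        hdhi hiC.1 hid
  · rw [Finset.sum_update_of_notMem fun h => absurd (mem_unblkF.1 h).2.2.1 (by omega)]
    exact sum_ubpF_overflowUpdate_le_of_gt hord hC hlen hdi

theorem cminusMem_of_overflowUpdate_eq_some
    (hC : ∀ p ≤ k, ∀ x, b p = some x → CminusMem lo hi x) (hdC : CminusMem lo hi d) :
    ∀ p ≤ k, ∀ x, overflowUpdate b d j p = some x → CminusMem lo hi x := by
  intro p hp x hx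
  by_cases hxd : x = d
  · exact hxd ▸ hdC
  · exact hC p hp x ((overflowUpdate_eq_some_of_ne hxd).1 hx).2.2

theorem exists_cwit_succ_mergedColours {φ : V → ℕ} {v : ℕ → V} {m : ℕ} {ℓ : ℕ → ℕ}
    {P : ℕ → ℕ → ℕ} (hwit : ∀ x, occursIn k b x → IsCWit φ v m x (ℓ x) (P x))
    (hwitord : ∀ x y, occursIn k b x → occursIn k b y → y < x → P x (ℓ x) < P y (startIdx y))
    (hodd : ∀ p ≤ k, ∀ x, b p = some x → Odd x → φ (v (m + 1)) < x)
    (hd : Even (φ (v (m + 1)))) (hlod : lo ≤ φ (v (m + 1))) :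
    ∃ pd, IsCWit φ v (m + 1) (φ (v (m + 1)))
        (∑ x ∈ mergedColours lo hi k b (φ (v (m + 1))) j, ℓ x + 1) pd ∧
      (pd 1 = m + 1 ∨ ∃ y ∈ mergedColours lo hi k b (φ (v (m + 1))) j, pd 1 = P y 1) := by
  refine exists_cwit_succ_of_witnesses _ hd
    (fun x hx => even_of_mem_mergedColours hodd hlod hx)
    (fun x hx => hwit x (occursIn_of_mem_mergedColours hx)) fun x hx y hy hyx => ?_
  have := hwitord x y (occursIn_of_mem_mergedColours hx) (occursIn_of_mem_mergedColours hy) hyx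
  rwa [startIdx, if_pos (even_of_mem_mergedColours hodd hlod hy)] at this

theorem overflowUpdate_witnesses {φ : V → ℕ} {v : ℕ → V} {m : ℕ} {ℓ : ℕ → ℕ}
    {P : ℕ → ℕ → ℕ} (hwit : ∀ x, occursIn k b x → IsCWit φ v m x (ℓ x) (P x)) {L : ℕ}
    {pd : ℕ → ℕ} (hpd : IsCWit φ v (m + 1) (φ (v (m + 1))) L pd) :
    ∀ x, occursIn k (overflowUpdate b (φ (v (m + 1))) j) x →
      IsCWit φ v (m + 1) x (Function.update ℓ (φ (v (m + 1))) L x)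
        (Function.update P (φ (v (m + 1))) pd x) := by
  intro x hx
  by_cases hxd : x = φ (v (m + 1))
  · subst hxd
    simpa using hpd
  · obtain ⟨hdx, q, -, hq, hbq⟩ := (occursIn_overflowUpdate_of_ne hxd).1 hx
    simpa [Function.update_of_ne hxd] using (hwit x ⟨q, hq, hbq⟩).succ hdx.le

theorem overflowUpdate_witnesses_ordered {φ : V → ℕ} {v : ℕ → V} {m : ℕ} {ℓ : ℕ → ℕ}
    {P : ℕ → ℕ → ℕ} (hord : EntriesOrdered k b)
    (hwit : ∀ x, occursIn k b x → IsCWit φ v m x (ℓ x) (P x))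
    (hwitord : ∀ x y, occursIn k b x → occursIn k b y → y < x → P x (ℓ x) < P y (startIdx y))
    (hodd : ∀ p ≤ k, ∀ x, b p = some x → Odd x → d < x) (hd : Even d) (hlod : lo ≤ d)
    {L : ℕ} {pd : ℕ → ℕ} (hpd : pd 1 = m + 1 ∨ ∃ y ∈ mergedColours lo hi k b d j, pd 1 = P y 1) :
    ∀ x y, occursIn k (overflowUpdate b d j) x → occursIn k (overflowUpdate b d j) y → y < x →
      Function.update P d pd x (Function.update ℓ d L x) <
        Function.update P d pd y (startIdx y) := by
  intro x y hx hy hyx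
  have hxd : x ≠ d := fun h => by
    obtain ⟨r, -, hr⟩ := hy
    exact absurd (le_of_overflowUpdate_eq_some hr) (by omega)
  obtain ⟨-, qx, -, hqx, hbx⟩ := (occursIn_overflowUpdate_of_ne hxd).1 hx
  simp only [Function.update_of_ne hxd]
  by_cases hyd : y = d
  · subst hyd
    simp only [Function.update_self, startIdx, if_pos hd]
    rcases hpd with hpd | ⟨z, hz, hpd⟩
    · exact hpd ▸ Nat.lt_succ_of_le (hwit x ⟨qx, hqx, hbx⟩).last_le
    · have := hwitord x z ⟨qx, hqx, hbx⟩ (occursIn_of_mem_mergedColours hz)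
        (lt_of_mem_mergedColours hord hz hx hxd)
      rwa [startIdx, if_pos (even_of_mem_mergedColours hodd hlod hz), ← hpd] at this
  · obtain ⟨-, qy, -, hqy, hby⟩ := (occursIn_overflowUpdate_of_ne hyd).1 hy
    simp only [Function.update_of_ne hyd]
    exact hwitord x y ⟨qx, hqx, hbx⟩ ⟨qy, hqy, hby⟩ hyx

end OverflowWitness

theorem colour_witness_update_overflow_general (lo hi : ℕ)
    (φ : V → ℕ) (hφ : ∀ x, φ x ∈ Set.Icc lo hi) (v : ℕ → V) (m : ℕ)
    (k : ℕ) (b : ℕ → Option ℕ) (hb : IsColourWitness lo hi φ v m k b)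
    (hdeven : Even (φ (v (m + 1))))
    (hnoodd : ∀ i ≤ k, ¬ ∃ c, b i = some c ∧ Odd c ∧ c < φ (v (m + 1)))
    (j : ℕ) (hj : j ≤ k)
    (hjidx : OverflowIdx k b (φ (v (m + 1))) j) :
    IsColourWitness lo hi φ v (m + 1) k
      (fun i => if j < i then
                  (if ∃ c, b i = some c ∧ c ≤ φ (v (m + 1)) then some (φ (v (m + 1))) else b i)
                else if i = j then some (φ (v (m + 1))) else none) := by
  show IsColourWitness lo hi φ v (m + 1) k (overflowUpdate b (φ (v (m + 1))) j)
  obtain ⟨hC, hord, hcon, -, ℓ, P, hwit, hwitord, hlen⟩ := hb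
  obtain ⟨hdlo, hdhi⟩ := hφ (v (m + 1))
  have hodd : ∀ p ≤ k, ∀ x, b p = some x → Odd x → φ (v (m + 1)) < x := fun p hp x hbx hx =>
    lt_of_le_of_ne (not_lt.1 fun h => hnoodd p hp ⟨x, hbx, hx, h⟩)
      (ne_of_odd_of_even hx hdeven).symm
  obtain ⟨pd, hpd, hpd1⟩ := exists_cwit_succ_mergedColours (j := j) hwit hwitord hodd hdeven hdlo
  exact ⟨cminusMem_of_overflowUpdate_eq_some hC (cminusMem_of_le_even hdlo le_rfl hdhi hdeven),
    EntriesOrdered.overflowUpdate hord, OddEntriesUnique.overflowUpdate hdeven hcon,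
    fun x hx => overflowUpdate_zero_not_odd hdeven hx, _, _, overflowUpdate_witnesses hwit hpd,
    overflowUpdate_witnesses_ordered hord hwit hwitord hodd hdeven hdlo hpd1,
    fun i hi => sum_ubpF_overflowUpdate_le hord hcon hC hjidx hodd hlen hj hdeven hdhi hi⟩

/-- Overflow update lemma for an even colour `d = φ(v_{m+1})` when no entry of `b` is an odd
colour `< d`: for the maximal index `j` satisfying `OverflowIdx`, setting `c_i = b_i` for
`i > j` with `b_i = ⊥` or `b_i > d`, `c_i = d` for `i > j` with `b_i` a number `≤ d`,
`c_j = d`, and `c_i = ⊥` for `i < j`, yields a colour witness for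
`ρ' = v_1,…,v_m,v_{m+1}`. -/
theorem colour_witness_update_overflow (lo hi : ℕ) (hlo : lo = 1 ∨ lo = 2) (hlohi : lo ≤ hi)
    (φ : V → ℕ) (hφ : ∀ x, φ x ∈ Set.Icc lo hi) (v : ℕ → V) (m : ℕ) (hm : 1 ≤ m)
    (k : ℕ) (b : ℕ → Option ℕ) (hb : IsColourWitness lo hi φ v m k b)
    (hdeven : Even (φ (v (m + 1))))
    (hnoodd : ∀ i ≤ k, ¬ ∃ c, b i = some c ∧ Odd c ∧ c < φ (v (m + 1)))
    (j : ℕ) (hj : j ≤ k)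
    (hjidx : OverflowIdx k b (φ (v (m + 1))) j)
    (hjmax : ∀ j', j' ≤ k → OverflowIdx k b (φ (v (m + 1))) j' → j' ≤ j) :
    IsColourWitness lo hi φ v (m + 1) k
      (fun i => if j < i then
                  (if ∃ c, b i = some c ∧ c ≤ φ (v (m + 1)) then some (φ (v (m + 1))) else b i)
                else if i = j then some (φ (v (m + 1))) else none) :=
  colour_witness_update_overflow_general lo hi φ hφ v m k b hb hdeven hnoodd j hj hjidx
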